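/- For every T > 0 there exists a constant C₁, independent of n, such that for every integer n ≥ 2, every x ∈ [0,1] and all 0 ≤ s ≤ t ≤ T, ∫₀ˢ ∫₀¹ (Gⁿ(t-r, x, y) - Gⁿ(s-r, x, y))² dy dr ≤ C₁·√(t-s). -/

import Mathlib

/-- `φ_j(x) = √2 sin(jπx)`. -/
noncomputable def phi (j : ℕ) (x : ℝ) : ℝ := Real.sqrt 2 * Real.sin ((j : ℝ) * Real.pi * x)

/-- The eigenvalue `λ_j^n = -4n² sin²(jπ/(2n))` of `n²Aⁿ`. -/
noncomputable def lamN (n j : ℕ) : ℝ :=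
  -4 * (n : ℝ)^2 * (Real.sin ((j : ℝ) * Real.pi / (2 * n)))^2

/-- `k_n(y) = ⌊ny⌋/n`. -/
noncomputable def kn (n : ℕ) (y : ℝ) : ℝ := (⌊(n : ℝ) * y⌋ : ℝ) / n

/-- `φ_j^n`, the piecewise linear interpolation of `φ_j` on the grid `{k/n}`:
for `x ∈ [k/n, (k+1)/n]`, `φ_j^n(x) = φ_j(k/n) + (nx - k)(φ_j((k+1)/n) - φ_j(k/n))`. -/
noncomputable def phiLin (n j : ℕ) (x : ℝ) : ℝ :=
  phi j ((⌊(n : ℝ) * x⌋ : ℝ) / n)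
    + ((n : ℝ) * x - (⌊(n : ℝ) * x⌋ : ℝ))
      * (phi j (((⌊(n : ℝ) * x⌋ : ℝ) + 1) / n) - phi j ((⌊(n : ℝ) * x⌋ : ℝ) / n))

/-- The discretized kernel `Gⁿ(t,x,y) = Σ_{j=1}^{n-1} e^{λ_j^n t} φ_j^n(x) φ_j(k_n(y))`. -/
noncomputable def GN (n : ℕ) (t x y : ℝ) : ℝ :=
  ∑ j ∈ Finset.Icc 1 (n - 1), Real.exp (lamN n j * t) * phiLin n j x * phi j (kn n y)

/-!
Writing `Gⁿ(t-r,x,y) - Gⁿ(s-r,x,y)` in the modes `j`, the sampled eigenfunctions `φ_j(k/n)`,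
`1 ≤ j ≤ n-1`, are orthogonal for the discrete inner product on the grid, so the `y`-integral is
`Σ_j (e^{λ_j(t-r)} - e^{λ_j(s-r)})² φ_j^n(x)²`. Since `|φ_j^n| ≤ √2` and `-λ_j^n ≥ 4j²`
(Jordan's inequality), the `r`-integral of the `j`-th term is at most `min (1/j²) (t-s)`, and
splitting the sum over `j` at `j ≈ (t-s)^{-1/2}` bounds it by `3√(t-s)`.
-/

open Real Finset MeasureTheory

theorem two_mul_sin_half_mul_sum_range_cos (θ : ℝ) (n : ℕ) :
    2 * sin (θ / 2) * ∑ k ∈ range n, cos (k * θ) = sin ((n - 1 / 2) * θ) + sin (θ / 2) := by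
  induction n with
  | zero =>
    rw [show ((0 : ℕ) - 1 / 2 : ℝ) * θ = -(θ / 2) by push_cast; ring, sin_neg]
    simp
  | succ n ih =>
    have h₁ : ((n + 1 : ℕ) - 1 / 2) * θ = n * θ + θ / 2 := by push_cast; ring
    have h₂ : ((n : ℝ) - 1 / 2) * θ = n * θ - θ / 2 := by ring
    rw [sum_range_succ, mul_add, ih, h₁, h₂, sin_add, sin_sub]
    ring

theorem sum_range_cos_int_mul_pi_div {n : ℕ} {m : ℤ} (hm0 : m ≠ 0) (hm : |m| < 2 * n) :
    ∑ k ∈ range n, cos (m * π * k / n) = (1 - (-1) ^ m) / 2 := by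
  have hn : (n : ℝ) ≠ 0 := by
    rintro hn
    simp only [Nat.cast_eq_zero.mp hn] at hm
    have := abs_nonneg m
    omega
  set θ : ℝ := m * π / n with hθ
  have hsin : sin (θ / 2) ≠ 0 := by
    rw [Ne, sin_eq_zero_iff]
    rintro ⟨k, hk⟩
    have hmk : (m : ℝ) = 2 * n * k := by
      rw [hθ] at hk
      field_simp at hk
      linarith
    have hmk' : m = 2 * n * k := by exact_mod_cast hmk
    rcases eq_or_ne k 0 with rfl | hk0
    · exact hm0 (by simpa using hmk')
    · rw [hmk', abs_mul, abs_of_nonneg (by positivity : (0 : ℤ) ≤ 2 * n)] at hm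
      nlinarith [Int.one_le_abs hk0]
  have hend : (n - 1 / 2) * θ = m * π - θ / 2 := by
    rw [hθ]
    field_simp
  have key := two_mul_sin_half_mul_sum_range_cos θ n
  rw [hend, sin_int_mul_pi_sub] at key
  have hterm : ∀ k : ℕ, cos (m * π * k / n) = cos (k * θ) := fun k => by
    rw [hθ, mul_div_assoc', mul_comm (k : ℝ)]
  rw [sum_congr rfl fun k _ => hterm k]
  apply mul_left_cancel₀ (mul_ne_zero two_ne_zero hsin)
  rw [key]
  ring

theorem phi_mul_phi (j l : ℕ) (u : ℝ) :
    phi j u * phi l u = cos ((j - l : ℤ) * π * u) - cos ((j + l : ℤ) * π * u) := by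
  rw [phi, phi, mul_mul_mul_comm, mul_self_sqrt zero_le_two, ← mul_assoc, two_mul_sin_mul_sin]
  push_cast
  ring_nf

theorem sum_range_phi_mul_phi {n j l : ℕ} (hj : j ∈ Icc 1 (n - 1)) (hl : l ∈ Icc 1 (n - 1)) :
    ∑ k ∈ range n, phi j (k / n) * phi l (k / n) = if j = l then (n : ℝ) else 0 := by
  rw [mem_Icc] at hj hl
  have hgrid : ∀ m : ℤ,
      ∑ k ∈ range n, cos (m * π * (k / n : ℝ)) = ∑ k ∈ range n, cos (m * π * k / n) :=
    fun m => sum_congr rfl fun k _ => by rw [mul_div_assoc]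
  have hplus := sum_range_cos_int_mul_pi_div (n := n) (m := j + l) (by omega)
    (by rw [abs_lt]; omega)
  simp only [phi_mul_phi, sum_sub_distrib, hgrid, hplus]
  split_ifs with hjl
  · subst hjl
    have h2 : (j + j : ℤ) = 2 * j := by ring
    simp [h2, zpow_mul]
  -- for `j ≠ l` the two cosine sums agree since `j - l` and `j + l` have the same parity
  · rw [sum_range_cos_int_mul_pi_div (by omega) (by rw [abs_lt]; omega), sub_eq_zero]
    have h2 : (j + l : ℤ) = (j - l) + 2 * l := by ring
    rw [h2, zpow_add₀ (by norm_num), zpow_mul]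
    simp

theorem kn_eq_of_mem_Ico {n k : ℕ} (hn : n ≠ 0) {y : ℝ}
    (hy : y ∈ Set.Ico (k / n : ℝ) ((k + 1) / n)) :
    kn n y = k / n := by
  have hn' : (0 : ℝ) < n := by positivity
  rw [Set.mem_Ico, div_le_iff₀ hn', lt_div_iff₀ hn'] at hy
  have hfloor : ⌊(n : ℝ) * y⌋ = k := by
    rw [Int.floor_eq_iff]
    push_cast
    constructor <;> linarith
  rw [kn, hfloor]
  rfl

theorem integral_comp_kn {n : ℕ} (hn : n ≠ 0) (F : ℝ → ℝ) :
    ∫ y in (0 : ℝ)..1, F (kn n y) = (∑ k ∈ range n, F (k / n)) / n := by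
  set a : ℕ → ℝ := fun k => k / n
  have hmono : ∀ k, a k ≤ a (k + 1) := fun k => by
    simp only [a]
    gcongr
    simp
  have hcell : ∀ k : ℕ,
      Set.EqOn (fun y => F (kn n y)) (fun _ => F (k / n)) (Set.Ioo (a k) (a (k + 1))) :=
    fun k y hy => by
      simp only [a, Nat.cast_succ] at hy
      simp only [kn_eq_of_mem_Ico hn (Set.Ioo_subset_Ico_self hy)]
  have hint : ∀ k < n, IntervalIntegrable (fun y => F (kn n y)) volume (a k) (a (k + 1)) :=
    fun k _ => intervalIntegrable_const.congr_uIoo (Set.uIoo_of_le (hmono k) ▸ (hcell k).symm)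
  have hcell_int : ∀ k : ℕ, ∫ y in a k..a (k + 1), F (kn n y) = F (k / n) / n := fun k => by
    rw [intervalIntegral.integral_congr_Ioo_of_le (hmono k) (hcell k),
      intervalIntegral.integral_const, smul_eq_mul]
    simp only [a]
    field_simp
    push_cast
    ring
  have h0 : a 0 = 0 := by simp [a]
  have h1 : a n = 1 := by simp [a, hn]
  rw [← h0, ← h1, ← intervalIntegral.sum_integral_adjacent_intervals hint, sum_div]
  exact sum_congr rfl fun k _ => hcell_int k

theorem integral_sq_sum_mul_phi_kn (n : ℕ) (c : ℕ → ℝ) :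
    ∫ y in (0 : ℝ)..1, (∑ j ∈ Icc 1 (n - 1), c j * phi j (kn n y)) ^ 2
      = ∑ j ∈ Icc 1 (n - 1), c j ^ 2 := by
  rcases eq_or_ne n 0 with rfl | hn
  · simp
  rw [integral_comp_kn hn (fun u => (∑ j ∈ Icc 1 (n - 1), c j * phi j u) ^ 2),
    div_eq_iff (by positivity)]
  calc ∑ k ∈ range n, (∑ j ∈ Icc 1 (n - 1), c j * phi j (k / n)) ^ 2
      = ∑ j ∈ Icc 1 (n - 1), ∑ l ∈ Icc 1 (n - 1),
          c j * c l * ∑ k ∈ range n, phi j (k / n) * phi l (k / n) := by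
        simp only [sq, sum_mul_sum]
        rw [sum_comm]
        refine sum_congr rfl fun j _ => ?_
        rw [sum_comm]
        refine sum_congr rfl fun l _ => ?_
        rw [mul_sum]
        exact sum_congr rfl fun k _ => by ring
    _ = ∑ j ∈ Icc 1 (n - 1), c j ^ 2 * n := by
        refine sum_congr rfl fun j hj => ?_
        simp_rw +contextual [sum_range_phi_mul_phi hj, mul_ite, mul_zero, sum_ite_eq, if_pos hj]
        ring
    _ = (∑ j ∈ Icc 1 (n - 1), c j ^ 2) * n := by rw [sum_mul]

theorem phi_mem_Icc (j : ℕ) (u : ℝ) : phi j u ∈ Set.Icc (-√2) √2 := by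
  obtain ⟨h₁, h₂⟩ := abs_le.mp (abs_sin_le_one (j * π * u))
  rw [phi]
  constructor <;> nlinarith [sqrt_nonneg 2]

theorem phiLin_sq_le (n j : ℕ) (x : ℝ) : phiLin n j x ^ 2 ≤ 2 := by
  set θ := (n : ℝ) * x - ⌊(n : ℝ) * x⌋
  have hθ₀ : 0 ≤ θ := Int.fract_nonneg _
  have hθ₁ : θ ≤ 1 := (Int.fract_lt_one _).le
  have hmem : phiLin n j x ∈ Set.Icc (-√2) √2 := by
    have := (convex_Icc (-√2) √2) (phi_mem_Icc j (⌊(n : ℝ) * x⌋ / n))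
      (phi_mem_Icc j ((⌊(n : ℝ) * x⌋ + 1) / n)) (sub_nonneg.2 hθ₁) hθ₀
      (sub_add_cancel 1 θ)
    convert this using 1
    simp only [phiLin, smul_eq_mul, θ]
    ring
  calc phiLin n j x ^ 2 ≤ √2 ^ 2 := sq_le_sq' hmem.1 hmem.2
    _ = 2 := sq_sqrt zero_le_two

theorem four_mul_sq_le_neg_lamN {n j : ℕ} (hj : j < n) : 4 * (j : ℝ) ^ 2 ≤ -lamN n j := by
  have hn : (0 : ℝ) < n := by exact_mod_cast (j.zero_le.trans_lt hj)
  have hjn : (j : ℝ) ≤ n := by exact_mod_cast hj.le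
  have hθ : j * π / (2 * n) ≤ π / 2 := by
    rw [div_le_div_iff₀ (by positivity) two_pos]
    nlinarith [pi_pos]
  have hsin : j / n ≤ sin (j * π / (2 * n)) := by
    convert mul_le_sin (by positivity) hθ using 1
    field_simp
  have hsq : (j / n : ℝ) ^ 2 ≤ sin (j * π / (2 * n)) ^ 2 :=
    pow_le_pow_left₀ (by positivity) hsin 2
  calc 4 * (j : ℝ) ^ 2 = 4 * n ^ 2 * (j / n) ^ 2 := by field_simp
    _ ≤ 4 * n ^ 2 * sin (j * π / (2 * n)) ^ 2 := by gcongr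
    _ = -lamN n j := by rw [lamN]; ring

theorem sq_one_sub_exp_neg_le {x : ℝ} (hx : 0 ≤ x) : (1 - exp (-x)) ^ 2 ≤ min 1 x := by
  have h₀ : 0 ≤ 1 - exp (-x) := sub_nonneg.2 (exp_le_one_iff.2 (neg_nonpos.2 hx))
  have h₁ : 1 - exp (-x) ≤ 1 := sub_le_self _ (exp_pos _).le
  have hx' : 1 - exp (-x) ≤ x := by linarith [add_one_le_exp (-x)]
  calc (1 - exp (-x)) ^ 2 ≤ 1 - exp (-x) := by nlinarith
    _ ≤ min 1 x := le_min h₁ hx'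

theorem integral_exp_mul_sub {c : ℝ} (hc : c ≠ 0) (s : ℝ) :
    ∫ r in (0 : ℝ)..s, exp (c * r - c * s) = (1 - exp (-(c * s))) / c := by
  rw [intervalIntegral.integral_comp_mul_sub (f := exp) hc, integral_exp, smul_eq_mul]
  simp only [mul_zero, zero_sub, sub_self, exp_zero]
  field_simp

theorem integral_sq_exp_sub_exp_le {a s t : ℝ} (ha : 0 < a) (hs : 0 ≤ s) (hst : s ≤ t) :
    ∫ r in (0 : ℝ)..s, (exp (-a * (t - r)) - exp (-a * (s - r))) ^ 2
      ≤ min (1 / (2 * a)) ((t - s) / 2) := by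
  have hfactor : ∀ r : ℝ, (exp (-a * (t - r)) - exp (-a * (s - r))) ^ 2
      = (1 - exp (-(a * (t - s)))) ^ 2 * exp (2 * a * r - 2 * a * s) := fun r => by
    have h₁ : exp (-a * (t - r)) = exp (-(a * (t - s))) * exp (-a * (s - r)) := by
      rw [← exp_add]
      ring_nf
    have h₂ : exp (-a * (s - r)) ^ 2 = exp (2 * a * r - 2 * a * s) := by
      rw [sq, ← exp_add]
      ring_nf
    rw [h₁, ← h₂]
    ring
  have hE : 0 ≤ 1 - exp (-(2 * a * s)) := sub_nonneg.2 (exp_le_one_iff.2 (by nlinarith))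
  simp_rw [hfactor]
  rw [intervalIntegral.integral_const_mul, integral_exp_mul_sub (by positivity)]
  calc (1 - exp (-(a * (t - s)))) ^ 2 * ((1 - exp (-(2 * a * s))) / (2 * a))
      ≤ min 1 (a * (t - s)) * (1 / (2 * a)) := by
        gcongr
        · exact sq_one_sub_exp_neg_le (mul_nonneg ha.le (sub_nonneg.2 hst))
        · exact sub_le_self _ (exp_pos _).le
    _ = min (1 / (2 * a)) ((t - s) / 2) := by
        rw [← div_eq_mul_one_div, ← min_div_div_right (by positivity)]
        congr 1
        field_simp

theorem sum_min_inv_sq_le (N : ℕ) {δ : ℝ} (hδ : 0 ≤ δ) :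
    ∑ j ∈ Icc 1 N, min ((j : ℝ) ^ 2)⁻¹ δ ≤ 3 * √δ := by
  rcases hδ.eq_or_lt with rfl | hδ
  · simp
  have hsqrt : 0 < √δ := sqrt_pos.2 hδ
  -- below the cutoff `J ≈ δ^{-1/2}` each term is at most `δ`, above it at most `1/j²`
  set J := ⌊(√δ)⁻¹⌋₊
  have hJ : (J : ℝ) ≤ (√δ)⁻¹ := Nat.floor_le (by positivity)
  have hJ' : (√δ)⁻¹ < J + 1 := Nat.lt_floor_add_one _
  have hsplit : Icc 1 N ⊆ Icc 1 J ∪ Ioo J (N + 1) := fun j hj => by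
    simp only [mem_union, mem_Icc, mem_Ioo] at hj ⊢
    omega
  have hhead : ∑ j ∈ Icc 1 J, min ((j : ℝ) ^ 2)⁻¹ δ ≤ √δ :=
    calc ∑ j ∈ Icc 1 J, min ((j : ℝ) ^ 2)⁻¹ δ ≤ ∑ _j ∈ Icc 1 J, δ :=
          sum_le_sum fun j _ => min_le_right _ _
      _ = J * δ := by simp
      _ ≤ (√δ)⁻¹ * δ := by gcongr
      _ = √δ := by rw [inv_mul_eq_div, div_eq_iff hsqrt.ne', mul_self_sqrt hδ.le]
  have htail : ∑ j ∈ Ioo J (N + 1), min ((j : ℝ) ^ 2)⁻¹ δ ≤ 2 * √δ :=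
    calc ∑ j ∈ Ioo J (N + 1), min ((j : ℝ) ^ 2)⁻¹ δ
          ≤ ∑ j ∈ Ioo J (N + 1), ((j : ℝ) ^ 2)⁻¹ :=
          sum_le_sum fun j _ => min_le_left _ _
      _ ≤ 2 / (J + 1) := sum_Ioo_inv_sq_le J (N + 1)
      _ ≤ 2 * √δ := by
        rw [div_le_iff₀ (by positivity)]
        nlinarith [mul_inv_cancel₀ hsqrt.ne']
  calc ∑ j ∈ Icc 1 N, min ((j : ℝ) ^ 2)⁻¹ δ
      ≤ ∑ j ∈ Icc 1 J ∪ Ioo J (N + 1), min ((j : ℝ) ^ 2)⁻¹ δ :=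
        sum_le_sum_of_subset_of_nonneg hsplit fun j _ _ => by positivity
    _ ≤ √δ + 2 * √δ := by
        rw [sum_union (disjoint_left.2 fun j h₁ h₂ => by
          simp only [mem_Icc, mem_Ioo] at h₁ h₂
          omega)]
        exact add_le_add hhead htail
    _ = 3 * √δ := by ring

theorem GN_sub_GN (n : ℕ) (t t' x y : ℝ) :
    GN n t x y - GN n t' x y = ∑ j ∈ Icc 1 (n - 1),
      (exp (lamN n j * t) - exp (lamN n j * t')) * phiLin n j x * phi j (kn n y) := by
  rw [GN, GN, ← sum_sub_distrib]
  exact sum_congr rfl fun j _ => by ring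

theorem integral_sq_exp_lamN_sub_mul_phiLin_le {n j : ℕ} (hj : j ∈ Icc 1 (n - 1)) (x : ℝ)
    {s t : ℝ} (hs : 0 ≤ s) (hst : s ≤ t) :
    ∫ r in (0 : ℝ)..s,
        ((exp (lamN n j * (t - r)) - exp (lamN n j * (s - r))) * phiLin n j x) ^ 2
      ≤ min ((j : ℝ) ^ 2)⁻¹ (t - s) := by
  rw [mem_Icc] at hj
  have hlam := four_mul_sq_le_neg_lamN (n := n) (j := j) (by omega)
  have hj2 : (1 : ℝ) ≤ j ^ 2 := by exact_mod_cast Nat.one_le_pow _ _ hj.1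
  have hexp := integral_sq_exp_sub_exp_le (a := -lamN n j) (by linarith) hs hst
  simp only [neg_neg] at hexp
  have hint :
      0 ≤ ∫ r in (0 : ℝ)..s, (exp (lamN n j * (t - r)) - exp (lamN n j * (s - r))) ^ 2 :=
    intervalIntegral.integral_nonneg hs fun r _ => sq_nonneg _
  simp_rw [mul_pow]
  rw [intervalIntegral.integral_mul_const]
  calc (∫ r in (0 : ℝ)..s, (exp (lamN n j * (t - r)) - exp (lamN n j * (s - r))) ^ 2)
        * phiLin n j x ^ 2
      ≤ min (1 / (2 * -lamN n j)) ((t - s) / 2) * 2 :=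
        mul_le_mul hexp (phiLin_sq_le n j x) (sq_nonneg _) (hint.trans hexp)
    _ = min (-lamN n j)⁻¹ (t - s) := by
        rw [min_mul_of_nonneg _ _ zero_le_two]
        congr 1 <;> field_simp
    _ ≤ min ((j : ℝ) ^ 2)⁻¹ (t - s) := by
        gcongr
        linarith

theorem GN_time_difference_bound_general (T : ℝ) :
    ∃ C₁ : ℝ, ∀ n : ℕ, 2 ≤ n → ∀ x ∈ Set.Icc (0:ℝ) 1, ∀ s t : ℝ,
      0 ≤ s → s ≤ t → t ≤ T →
      (∫ r in (0:ℝ)..s, ∫ y in (0:ℝ)..1, (GN n (t - r) x y - GN n (s - r) x y)^2)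
        ≤ C₁ * Real.sqrt (t - s) := by
  refine ⟨3, fun n _ x _ s t hs hst _ => ?_⟩
  set c : ℕ → ℝ → ℝ := fun j r =>
    (exp (lamN n j * (t - r)) - exp (lamN n j * (s - r))) * phiLin n j x
  have hc : ∀ j, Continuous (c j) := fun j => by fun_prop
  calc ∫ r in (0 : ℝ)..s, ∫ y in (0 : ℝ)..1, (GN n (t - r) x y - GN n (s - r) x y) ^ 2
      = ∫ r in (0 : ℝ)..s, ∑ j ∈ Icc 1 (n - 1), c j r ^ 2 := by
        simp_rw [GN_sub_GN, integral_sq_sum_mul_phi_kn, c]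
    _ = ∑ j ∈ Icc 1 (n - 1), ∫ r in (0 : ℝ)..s, c j r ^ 2 :=
        intervalIntegral.integral_finsetSum fun j _ => ((hc j).pow 2).intervalIntegrable _ _
    _ ≤ ∑ j ∈ Icc 1 (n - 1), min ((j : ℝ) ^ 2)⁻¹ (t - s) :=
        sum_le_sum fun j hj => integral_sq_exp_lamN_sub_mul_phiLin_le hj x hs hst
    _ ≤ 3 * √(t - s) := sum_min_inv_sq_le _ (sub_nonneg.2 hst)

/-- For every `T > 0` there is a constant `C₁` independent of `n` such that
`∫₀ˢ∫₀¹ (Gⁿ(t-r,x,y) - Gⁿ(s-r,x,y))² dy dr ≤ C₁ √(t-s)` for all `x ∈ [0,1]`,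
`0 ≤ s ≤ t ≤ T`. -/
theorem GN_time_difference_bound (T : ℝ) (hT : 0 < T) :
    ∃ C₁ : ℝ, ∀ n : ℕ, 2 ≤ n → ∀ x ∈ Set.Icc (0:ℝ) 1, ∀ s t : ℝ,
      0 ≤ s → s ≤ t → t ≤ T →
      (∫ r in (0:ℝ)..s, ∫ y in (0:ℝ)..1, (GN n (t - r) x y - GN n (s - r) x y)^2)
        ≤ C₁ * Real.sqrt (t - s) :=
  GN_time_difference_bound_general T
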